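/- arXiv:2303.08074 — 2 statements merged into one kernel-verified Lean document; each statement's English description precedes it below -/
import Mathlib

section
/- Let 0<d<1 and h∈ℝ, and let y,Φ:(0,r₀]→(0,∞) be continuous functions. Suppose there exist constants C*>0, M>0 and ε₀∈(0,1/8] such that for every ε∈(0,ε₀] and every r∈(0,r₀/2] one has y(r) ≤ C* ε^{-h} Φ(r) y(r(1-ε))^d, and moreover max_{r/2 ≤ τ ≤ r} Φ(τ) ≤ M Φ(r) for all r∈(0,r₀/2]. Then there exists a constant c₁>0, depending only on C*, M, d, h, ε₀, such that y(r) ≤ c₁ Φ(r)^{1/(1-d)} for all r∈(0,r₀/2]. -/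
open Filter Real


/-- Bootstrap iteration lemma: if `y(r) ≤ C* ε^{-h} Φ(r) y(r(1-ε))^d` for all small `ε`
and `Φ` is doubling-controlled, then `y(r) ≤ c₁ Φ(r)^{1/(1-d)}`, with `c₁` depending only
on `C*, M, d, h, ε₀`. -/
theorem stmt0 (d h Cs M ε₀ : ℝ) (hd : 0 < d) (hd1 : d < 1) (hC : 0 < Cs) (hM : 0 < M)
    (hε₀ : ε₀ ∈ Set.Ioc (0 : ℝ) (1/8)) :
    ∃ c₁ > (0:ℝ), ∀ (r₀ : ℝ), 0 < r₀ → ∀ y Φ : ℝ → ℝ,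
      ContinuousOn y (Set.Ioc 0 r₀) → ContinuousOn Φ (Set.Ioc 0 r₀) →
      (∀ r ∈ Set.Ioc (0:ℝ) r₀, 0 < y r) →
      (∀ r ∈ Set.Ioc (0:ℝ) r₀, 0 < Φ r) →
      (∀ ε ∈ Set.Ioc (0:ℝ) ε₀, ∀ r ∈ Set.Ioc (0:ℝ) (r₀/2),
        y r ≤ Cs * ε ^ (-h) * Φ r * (y (r * (1 - ε))) ^ d) →
      (∀ r ∈ Set.Ioc (0:ℝ) (r₀/2), ∀ τ ∈ Set.Icc (r/2) r, Φ τ ≤ M * Φ r) →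
      ∀ r ∈ Set.Ioc (0:ℝ) (r₀/2), y r ≤ c₁ * (Φ r) ^ (1/(1-d)) := by
  obtain ⟨hε₀pos, hε₀le⟩ := hε₀
  have hd' : (0:ℝ) < 1 - d := by linarith
  set T : ℝ := ∑' j : ℕ, ((j:ℝ)+1) * d^j with hT
  refine ⟨(Cs * M * ε₀ ^ (-h)) ^ (1/(1-d)) * (2:ℝ) ^ (h * T), by positivity, ?_⟩
  intro r₀ hr₀ y Φ hyc hΦc hypos hΦpos hy hΦd r hrmem
  obtain ⟨hr, hr2⟩ := hrmem
  -- summability facts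
  have hsum2 : Summable (fun j : ℕ => ((j:ℝ)+1) * d^j) := by
    have h1 : Summable (fun j : ℕ => (j:ℝ) * d^j) := by
      have := summable_pow_mul_geometric_of_norm_lt_one 1 (r := d)
        (by rw [Real.norm_eq_abs, abs_of_pos hd]; exact hd1)
      simpa using this
    have h2 : Summable (fun j : ℕ => d^j) := summable_geometric_of_lt_one hd.le hd1
    simpa [add_mul, one_mul] using h1.add h2
  set S : ℕ → ℝ := fun n => ∑ j ∈ Finset.range n, d^j with hSdef
  set Tn : ℕ → ℝ := fun n => ∑ j ∈ Finset.range n, ((j:ℝ)+1) * d^j with hTndef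
  have hS : Tendsto S atTop (nhds (1-d)⁻¹) :=
    (hasSum_geometric_of_lt_one hd.le hd1).tendsto_sum_nat
  have hTn : Tendsto Tn atTop (nhds T) := hsum2.hasSum.tendsto_sum_nat
  -- the sequence εⱼ and the products P n
  set e : ℕ → ℝ := fun j => ε₀ / 2 ^ j with hedef
  have hemem : ∀ j : ℕ, e (j+1) ∈ Set.Ioc (0:ℝ) ε₀ := by
    intro j
    constructor
    · exact div_pos hε₀pos (by positivity)
    · exact div_le_self hε₀pos.le (one_le_pow₀ (by norm_num))
  set P : ℕ → ℝ := fun n => ∏ j ∈ Finset.range n, (1 - e (j+1)) with hPdef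
  have hfacpos : ∀ j : ℕ, 0 < 1 - e (j+1) := by
    intro j; have := (hemem j).2; linarith
  have hfac1 : ∀ j : ℕ, 1 - e (j+1) ≤ 1 := by
    intro j; have := (hemem j).1; linarith
  have hPpos : ∀ n, 0 < P n := fun n => Finset.prod_pos (fun j _ => hfacpos j)
  have hPsucc : ∀ n, P (n+1) = P n * (1 - e (n+1)) := fun n => Finset.prod_range_succ _ n
  have hPle1 : ∀ n, P n ≤ 1 := by
    intro n
    exact Finset.prod_le_one (fun j _ => (hfacpos j).le) (fun j _ => hfac1 j)
  have hPanti : Antitone P := by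
    apply antitone_nat_of_succ_le
    intro n
    rw [hPsucc n]
    nlinarith [hPpos n, hfacpos n, hfac1 n]
  have hPlbs : ∀ n, 1 - ε₀ + ε₀ / 2^n ≤ P n := by
    intro n
    induction n with
    | zero => simp [hPdef]
    | succ n ih =>
      rw [hPsucc n]
      have h1 : e (n+1) = ε₀ / 2^(n+1) := rfl
      have hp : (1:ℝ) ≤ 2^n := one_le_pow₀ (by norm_num)
      have key : 1 - ε₀ + ε₀ / 2^(n+1) ≤ (1 - ε₀ + ε₀/2^n) * (1 - ε₀/2^(n+1)) := by
        have h2 : (2:ℝ)^(n+1) = 2 * 2^n := by ring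
        rw [h2]
        have hpp : (0:ℝ) < 2^n := by positivity
        simp only [div_mul_eq_div_div_swap]
        set q : ℝ := ε₀ / 2^n with hq
        have hq0 : 0 < q := by positivity
        have hqle : q ≤ ε₀ := div_le_self hε₀pos.le hp
        nlinarith
      calc 1 - ε₀ + ε₀ / 2^(n+1) ≤ (1 - ε₀ + ε₀/2^n) * (1 - ε₀/2^(n+1)) := key
        _ ≤ P n * (1 - e (n+1)) := by
            rw [h1]
            apply mul_le_mul_of_nonneg_right ih (by have := hfacpos n; rw [h1] at this; linarith)
  have hPlb : ∀ n, (7:ℝ)/8 ≤ P n := by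
    intro n
    have := hPlbs n
    have h2 : 0 < ε₀ / 2^n := by positivity
    linarith
  -- the limit L of P
  have hbdd : BddBelow (Set.range P) := ⟨7/8, by rintro x ⟨n, rfl⟩; exact hPlb n⟩
  set L : ℝ := ⨅ n, P n with hLdef
  have hLtend : Tendsto P atTop (nhds L) := tendsto_atTop_ciInf hPanti hbdd
  have hLlb : (7:ℝ)/8 ≤ L := le_ciInf hPlb
  have hLub : L ≤ 1 := le_trans (ciInf_le hbdd 0) (hPle1 0)
  -- membership facts
  have hmem2 : ∀ n, r * P n ∈ Set.Ioc (0:ℝ) (r₀/2) := by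
    intro n
    refine ⟨mul_pos hr (hPpos n), ?_⟩
    calc r * P n ≤ r * 1 := mul_le_mul_of_nonneg_left (hPle1 n) hr.le
      _ = r := mul_one r
      _ ≤ r₀/2 := hr2
  have hmemIoc : ∀ n, r * P n ∈ Set.Ioc (0:ℝ) r₀ := by
    intro n
    exact ⟨(hmem2 n).1, le_trans (hmem2 n).2 (by linarith)⟩
  have hrIoc : r ∈ Set.Ioc (0:ℝ) r₀ := ⟨hr, by linarith⟩
  have hτmem : ∀ n, r * P n ∈ Set.Icc (r/2) r := by
    intro n
    constructor
    · have : r * (1/2) ≤ r * P n :=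
        mul_le_mul_of_nonneg_left (le_trans (by norm_num) (hPlb n)) hr.le
      linarith [this]
    · calc r * P n ≤ r * 1 := mul_le_mul_of_nonneg_left (hPle1 n) hr.le
        _ = r := mul_one r
  set A : ℝ := Cs * M * Φ r * ε₀ ^ (-h) with hAdef
  have hΦr : 0 < Φ r := hΦpos r hrIoc
  have hA : 0 < A := by positivity
  -- rewrite of e (n+1) ^ (-h)
  have hepow : ∀ n : ℕ, (e (n+1)) ^ (-h) = ε₀ ^ (-h) * 2 ^ (((n:ℝ)+1) * h) := by
    intro n
    have h2 : ((2:ℝ) ^ (n+1) : ℝ) = (2:ℝ) ^ (((n:ℝ)+1)) := by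
      rw [← Real.rpow_natCast 2 (n+1)]; push_cast; ring_nf
    calc (ε₀ / 2^(n+1)) ^ (-h) = ε₀ ^ (-h) / ((2:ℝ)^(n+1)) ^ (-h) := by
          rw [Real.div_rpow hε₀pos.le (by positivity)]
      _ = ε₀ ^ (-h) / (2:ℝ) ^ (((n:ℝ)+1) * (-h)) := by
          rw [h2, ← Real.rpow_mul (by norm_num)]
      _ = ε₀ ^ (-h) * 2 ^ (((n:ℝ)+1) * h) := by
          rw [div_eq_mul_inv, ← Real.rpow_neg (by norm_num)]
          ring_nf
  -- one iteration step
  have step : ∀ n : ℕ, y (r * P n) ≤ A * 2 ^ (((n:ℝ)+1) * h) * (y (r * P (n+1))) ^ d := by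
    intro n
    have h0 := hy (e (n+1)) (hemem n) (r * P n) (hmem2 n)
    have hpt : r * P n * (1 - e (n+1)) = r * P (n+1) := by rw [hPsucc n]; ring
    rw [hpt] at h0
    have hΦb : Φ (r * P n) ≤ M * Φ r := hΦd r ⟨hr, hr2⟩ (r * P n) (hτmem n)
    have hX : 0 ≤ (y (r * P (n+1))) ^ d := Real.rpow_nonneg (hypos _ (hmemIoc (n+1))).le _
    have hce : 0 ≤ Cs * (e (n+1)) ^ (-h) := by positivity
    calc y (r * P n) ≤ Cs * (e (n+1)) ^ (-h) * Φ (r * P n) * (y (r * P (n+1))) ^ d := h0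
      _ ≤ Cs * (e (n+1)) ^ (-h) * (M * Φ r) * (y (r * P (n+1))) ^ d := by
          apply mul_le_mul_of_nonneg_right _ hX
          exact mul_le_mul_of_nonneg_left hΦb hce
      _ = A * 2 ^ (((n:ℝ)+1) * h) * (y (r * P (n+1))) ^ d := by
          rw [hepow n, hAdef]; ring
  -- the main inductive inequality
  have main : ∀ n : ℕ, y r ≤ A ^ (S n) * 2 ^ (h * Tn n) * (y (r * P n)) ^ ((d:ℝ)^n) := by
    intro n
    induction n with
    | zero =>
      simp [hSdef, hTndef, hPdef]
    | succ n ih =>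
      have hyn1 : 0 < y (r * P (n+1)) := hypos _ (hmemIoc (n+1))
      have hdn : (0:ℝ) ≤ d^n := by positivity
      have h1 : (y (r * P n)) ^ ((d:ℝ)^n)
          ≤ (A * 2 ^ (((n:ℝ)+1) * h)) ^ ((d:ℝ)^n) * (y (r * P (n+1))) ^ ((d:ℝ)^(n+1)) := by
        calc (y (r * P n)) ^ ((d:ℝ)^n)
            ≤ (A * 2 ^ (((n:ℝ)+1) * h) * (y (r * P (n+1))) ^ d) ^ ((d:ℝ)^n) :=
              Real.rpow_le_rpow (hypos _ (hmemIoc n)).le (step n) hdn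
          _ = (A * 2 ^ (((n:ℝ)+1) * h)) ^ ((d:ℝ)^n) * ((y (r * P (n+1))) ^ d) ^ ((d:ℝ)^n) :=
              Real.mul_rpow (by positivity) (by positivity)
          _ = (A * 2 ^ (((n:ℝ)+1) * h)) ^ ((d:ℝ)^n) * (y (r * P (n+1))) ^ ((d:ℝ)^(n+1)) := by
              rw [← Real.rpow_mul hyn1.le]
              congr 1
              rw [pow_succ]; ring
      calc y r ≤ A ^ (S n) * 2 ^ (h * Tn n) * (y (r * P n)) ^ ((d:ℝ)^n) := ih
        _ ≤ A ^ (S n) * 2 ^ (h * Tn n) *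
              ((A * 2 ^ (((n:ℝ)+1) * h)) ^ ((d:ℝ)^n) * (y (r * P (n+1))) ^ ((d:ℝ)^(n+1))) :=
            mul_le_mul_of_nonneg_left h1 (by positivity)
        _ = A ^ (S (n+1)) * 2 ^ (h * Tn (n+1)) * (y (r * P (n+1))) ^ ((d:ℝ)^(n+1)) := by
            rw [Real.mul_rpow hA.le (by positivity), ← Real.rpow_mul (by norm_num : (0:ℝ) ≤ 2)]
            have hS1 : S (n+1) = S n + d^n := Finset.sum_range_succ _ n
            have hT1 : Tn (n+1) = Tn n + ((n:ℝ)+1) * d^n := Finset.sum_range_succ _ n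
            rw [hS1, hT1, Real.rpow_add hA, mul_add (h), Real.rpow_add (by norm_num : (0:ℝ) < 2)]
            ring_nf
  -- limits
  have hyL : 0 < y (r * L) := by
    apply hypos
    constructor
    · positivity
    · calc r * L ≤ r * 1 := mul_le_mul_of_nonneg_left hLub hr.le
        _ = r := mul_one r
        _ ≤ r₀ := by linarith
  have hrL : Tendsto (fun n => r * P n) atTop (nhds (r * L)) := hLtend.const_mul r
  have hyseq : Tendsto (fun n => y (r * P n)) atTop (nhds (y (r * L))) := by
    have hmemL : r * L ∈ Set.Ioc (0:ℝ) r₀ := by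
      refine ⟨by positivity, ?_⟩
      calc r * L ≤ r * 1 := mul_le_mul_of_nonneg_left hLub hr.le
        _ = r := mul_one r
        _ ≤ r₀ := by linarith
    have hcw := (hyc (r * L) hmemL).tendsto
    exact hcw.comp (tendsto_nhdsWithin_of_tendsto_nhds_of_eventually_within _ hrL
      (Filter.Eventually.of_forall (fun n => hmemIoc n)))
  have l1 : Tendsto (fun n => A ^ S n) atTop (nhds (A ^ (1-d)⁻¹)) :=
    Filter.Tendsto.rpow tendsto_const_nhds hS (Or.inl hA.ne')
  have l2 : Tendsto (fun n => (2:ℝ) ^ (h * Tn n)) atTop (nhds ((2:ℝ) ^ (h * T))) :=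
    Filter.Tendsto.rpow tendsto_const_nhds (hTn.const_mul h) (Or.inl (by norm_num))
  have l3 : Tendsto (fun n => (y (r * P n)) ^ ((d:ℝ)^n)) atTop (nhds 1) := by
    have := Filter.Tendsto.rpow hyseq
      (tendsto_pow_atTop_nhds_zero_of_lt_one hd.le hd1) (Or.inl hyL.ne')
    simpa using this
  have hlim : Tendsto (fun n => A ^ (S n) * 2 ^ (h * Tn n) * (y (r * P n)) ^ ((d:ℝ)^n))
      atTop (nhds (A ^ (1-d)⁻¹ * 2 ^ (h * T) * 1)) := (l1.mul l2).mul l3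
  have hfin : y r ≤ A ^ (1-d)⁻¹ * 2 ^ (h * T) * 1 := ge_of_tendsto' hlim main
  have hAsplit : A ^ (1-d)⁻¹ = (Cs * M * ε₀ ^ (-h)) ^ (1-d)⁻¹ * (Φ r) ^ (1-d)⁻¹ := by
    have : A = (Cs * M * ε₀ ^ (-h)) * Φ r := by rw [hAdef]; ring
    rw [this, Real.mul_rpow (by positivity) hΦr.le]
  calc y r ≤ A ^ (1-d)⁻¹ * 2 ^ (h * T) * 1 := hfin
    _ = (Cs * M * ε₀ ^ (-h)) ^ (1/(1-d)) * 2 ^ (h * T) * (Φ r) ^ (1/(1-d)) := by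
        rw [hAsplit, one_div]; ring
end

section
/- Let N ≥ 2, q > 1, m > 0, r₀ > 0, and let w : [r₀,∞) → (0,∞) be a C¹ function satisfying w'(r) + m r^{(1-q)(N-1)} w(r)^q ≥ 0 for all r ≥ r₀, with q(N-1) - N > 0. Then for all r ≥ r₁ ≥ r₀, w(r)^{1-q} - w(r₁)^{1-q} ≤ (m(q-1)/(q(N-1)-N)) (r₁^{N-q(N-1)} - r^{N-q(N-1)}). In particular w(r) is bounded below by a positive constant: w(r) ≥ (w(r₁)^{1-q} + (m(q-1)/(q(N-1)-N)) r₁^{N-q(N-1)})^{-1/(q-1)} for all r ≥ r₁. -/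
/-- Integration of the Riccati differential inequality `w' + m r^{(1-q)(N-1)} w^q ≥ 0`:
for `r ≥ r₁ ≥ r₀`, `w(r)^{1-q} - w(r₁)^{1-q} ≤ (m(q-1)/(q(N-1)-N))(r₁^{N-q(N-1)} - r^{N-q(N-1)})`,
whence a positive lower bound for `w`. -/
theorem stmt9 (N : ℕ) (hN : 2 ≤ N) (q m r₀ : ℝ) (hq : 1 < q) (hm : 0 < m) (hr₀ : 0 < r₀)
    (hqN : 0 < q * ((N : ℝ) - 1) - (N : ℝ))
    (w w' : ℝ → ℝ)
    (hwpos : ∀ r, r₀ ≤ r → 0 < w r)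
    (hderiv : ∀ r, r₀ ≤ r → HasDerivAt w (w' r) r)
    (hw'cont : ContinuousOn w' (Set.Ici r₀))
    (hineq : ∀ r, r₀ ≤ r → 0 ≤ w' r + m * r ^ ((1 - q) * ((N : ℝ) - 1)) * w r ^ q) :
    ∀ r₁, r₀ ≤ r₁ → ∀ r, r₁ ≤ r →
      (w r ^ (1 - q) - w r₁ ^ (1 - q)
        ≤ (m * (q - 1) / (q * ((N : ℝ) - 1) - (N : ℝ))) *
            (r₁ ^ ((N : ℝ) - q * ((N : ℝ) - 1)) - r ^ ((N : ℝ) - q * ((N : ℝ) - 1)))) ∧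
      (w r₁ ^ (1 - q) + (m * (q - 1) / (q * ((N : ℝ) - 1) - (N : ℝ))) *
            r₁ ^ ((N : ℝ) - q * ((N : ℝ) - 1))) ^ (-(1/(q-1))) ≤ w r := by
  set β : ℝ := (N : ℝ) - q * ((N : ℝ) - 1) with hβ
  set C : ℝ := m * (q - 1) / (q * ((N : ℝ) - 1) - (N : ℝ)) with hC
  have hβneg : β < 0 := by simp only [hβ]; linarith
  have hCpos : 0 < C := by
    apply div_pos (by nlinarith) hqN
  have hCβ : C * β = -(m * (q - 1)) := by
    rw [hC]; field_simp; ring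
  have hexp : (1 - q) * ((N : ℝ) - 1) = β - 1 := by rw [hβ]; ring
  -- the auxiliary function
  set f : ℝ → ℝ := fun x => w x ^ (1 - q) + C * x ^ β with hf
  set f' : ℝ → ℝ := fun x => w' x * (1 - q) * w x ^ (1 - q - 1) + C * (β * x ^ (β - 1)) with hf'
  have hfd : ∀ x, r₀ ≤ x → HasDerivAt f (f' x) x := by
    intro x hx
    have h1 : HasDerivAt (fun y => w y ^ (1 - q)) (w' x * (1 - q) * w x ^ (1 - q - 1)) x :=
      (hderiv x hx).rpow_const (Or.inl (hwpos x hx).ne')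
    have h2 : HasDerivAt (fun y : ℝ => y ^ β) (β * x ^ (β - 1)) x :=
      Real.hasDerivAt_rpow_const (Or.inl (lt_of_lt_of_le hr₀ hx).ne')
    exact h1.add ((h2.const_mul C))
  have hfd' : ∀ x, r₀ < x → f' x ≤ 0 := by
    intro x hx
    have hxpos : 0 < x := hr₀.trans hx
    have hwp := hwpos x hx.le
    have hi := hineq x hx.le
    rw [hexp] at hi
    -- multiply hi by w x ^ (1-q-1) > 0
    have hkey : 0 ≤ w' x * w x ^ (1 - q - 1) + m * x ^ (β - 1) := by
      have h0 : 0 < w x ^ (1 - q - 1) := Real.rpow_pos_of_pos hwp _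
      have := mul_nonneg hi h0.le
      have hcanc : w x ^ q * w x ^ (1 - q - 1) = 1 := by
        rw [← Real.rpow_add hwp]
        norm_num
      calc (0:ℝ) ≤ (w' x + m * x ^ (β - 1) * w x ^ q) * w x ^ (1 - q - 1) := this
        _ = w' x * w x ^ (1 - q - 1) + m * x ^ (β - 1) * (w x ^ q * w x ^ (1 - q - 1)) := by ring
        _ = w' x * w x ^ (1 - q - 1) + m * x ^ (β - 1) := by rw [hcanc]; ring
    have : f' x = (1 - q) * (w' x * w x ^ (1 - q - 1) + m * x ^ (β - 1)) := by
      have hcb : C * (β * x ^ (β - 1)) = -(m * (q - 1)) * x ^ (β - 1) := by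
        rw [← hCβ]; ring
      simp only [hf']
      rw [hcb]; ring
    rw [this]
    have : 1 - q < 0 := by linarith
    exact mul_nonpos_of_nonpos_of_nonneg this.le hkey
  intro r₁ hr₁ r hr
  have hr₀r : r₀ ≤ r := hr₁.trans hr
  -- antitone on Icc r₁ r
  have hanti : AntitoneOn f (Set.Icc r₁ r) := by
    apply antitoneOn_of_deriv_nonpos (convex_Icc r₁ r)
    · intro x hx
      exact ((hfd x (hr₁.trans hx.1)).continuousAt).continuousWithinAt
    · intro x hx
      rw [interior_Icc] at hx
      exact ((hfd x (hr₁.trans hx.1.le)).differentiableAt).differentiableWithinAt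
    · intro x hx
      rw [interior_Icc] at hx
      rw [(hfd x (hr₁.trans hx.1.le)).deriv]
      exact hfd' x (lt_of_le_of_lt hr₁ hx.1)
  have hmain : f r ≤ f r₁ := hanti (Set.left_mem_Icc.mpr hr) (Set.right_mem_Icc.mpr hr) hr
  have h1 : w r ^ (1 - q) - w r₁ ^ (1 - q) ≤ C * (r₁ ^ β - r ^ β) := by
    simp only [hf] at hmain
    nlinarith [hmain]
  refine ⟨h1, ?_⟩
  -- second part
  have hr₁pos : 0 < r₁ := hr₀.trans_le hr₁
  have hrpos : 0 < r := hr₀.trans_le hr₀r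
  set K : ℝ := w r₁ ^ (1 - q) + C * r₁ ^ β with hK
  have hwrK : w r ^ (1 - q) ≤ K := by
    have hrβ : 0 < r ^ β := Real.rpow_pos_of_pos hrpos _
    nlinarith [h1]
  have hwr : 0 < w r := hwpos r hr₀r
  have hwr1q : 0 < w r ^ (1 - q) := Real.rpow_pos_of_pos hwr _
  have hKpos : 0 < K := hwr1q.trans_le hwrK
  have hneg : -(1/(q-1)) = 1/(1-q) := by rw [show (1:ℝ)-q = -(q-1) by ring, div_neg]
  rw [hneg]
  have h2 : K ^ (1/(1-q)) ≤ (w r ^ (1 - q)) ^ (1/(1-q)) := by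
    apply Real.rpow_le_rpow_of_nonpos hwr1q hwrK
    apply le_of_lt
    apply div_neg_of_pos_of_neg one_pos
    linarith
  calc K ^ (1/(1-q)) ≤ (w r ^ (1 - q)) ^ (1/(1-q)) := h2
    _ = w r := by
        rw [← Real.rpow_mul hwr.le, mul_one_div, div_self (by linarith : (1:ℝ)-q ≠ 0), Real.rpow_one]
end
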